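/- Let (x^k) be generated by the augmented Lagrangian method (Algorithm 3.1) applied to the partially penalized GNEP, under Assumption 3.2 with ε_k → 0 and ε'_k → 0, and let x̄ be a limit point of (x^k). If GNEP-EMFCQ holds at x̄ for the combined constraints c^ν = (g^ν, h^ν), then x̄ is feasible for the GNEP and x̄ is a KKT point of the GNEP. -/

import Mathlib

/-!
Fix a player and pass to a subsequence along which `x^{k+1} → x̄`. If the penalty parameter stays
bounded, the safeguarded update makes the complementarity measure of `g` decay geometrically; if
it diverges, `λ = (u + ρ g)₊` vanishes eventually where `g(x̄) < 0` and blows up where `g(x̄) > 0`.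
Either way the multipliers of the constraints inactive at `x̄` tend to zero. Pairing the
approximate stationarity residual with the EMFCQ direction `d` makes `∑ λᵢ ⟪∇cᵢ, d⟫` bounded
below, while every active term is at most `-δ λᵢ`: the multipliers stay bounded. A convergent
subsequence of them gives the KKT multipliers, and its existence excludes `g(x̄) > 0` when the
penalty diverges.
-/
open Filter Topology Finset Function RealInnerProductSpace

/-- The strategy space of a GNEP: one Euclidean block per player. -/
abbrev Strat {N : ℕ} (n : Fin N → ℕ) := (ν : Fin N) → EuclideanSpace ℝ (Fin (n ν))

/-- Partial gradient of `f : Strat n → ℝ` with respect to player `ν`'s block at `x`. -/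
noncomputable def pgrad {N : ℕ} {n : Fin N → ℕ} (ν : Fin N)
    (f : Strat n → ℝ) (x : Strat n) : EuclideanSpace ℝ (Fin (n ν)) :=
  gradient (fun z => f (Function.update x ν z)) (x ν)

/-- Positive linear dependence of a family on a finite index set. -/
def PosLinDep {ι E : Type*} [AddCommGroup E] [Module ℝ E]
    (s : Finset ι) (v : ι → E) : Prop :=
  ∃ a : ι → ℝ, (∀ i, 0 ≤ a i) ∧ (∃ i ∈ s, a i ≠ 0) ∧ ∑ i ∈ s, a i • v i = 0

/-- Linear dependence of a family on a finite index set. -/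
def LinDep {ι E : Type*} [AddCommGroup E] [Module ℝ E]
    (s : Finset ι) (v : ι → E) : Prop :=
  ∃ a : ι → ℝ, (∃ i ∈ s, a i ≠ 0) ∧ ∑ i ∈ s, a i • v i = 0

/-- CPLD with respect to player `ν`. -/
def CPLDnu {N : ℕ} {n : Fin N → ℕ} {ι : Type*} (ν : Fin N)
    (c : ι → Strat n → ℝ) (x : Strat n) : Prop :=
  ∀ I : Finset ι, (∀ i ∈ I, c i x = 0) →
    PosLinDep I (fun i => pgrad ν (c i) x) →
    ∃ U ∈ 𝓝 x, ∀ y ∈ U, LinDep I (fun i => pgrad ν (c i) y)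

/-- EMFCQ with respect to player `ν`. -/
def EMFCQnu {N : ℕ} {n : Fin N → ℕ} {ι : Type*} (ν : Fin N)
    (c : ι → Strat n → ℝ) (x : Strat n) : Prop :=
  ∃ d : EuclideanSpace ℝ (Fin (n ν)), ∀ i, 0 ≤ c i x → inner (𝕜 := ℝ) (pgrad ν (c i) x) d < 0

lemma abs_le_sqrt_sum_sq {ι : Type*} [Fintype ι] (v : ι → ℝ) (i : ι) :
    |v i| ≤ √(∑ j, v j ^ 2) :=
  Real.abs_le_sqrt (single_le_sum (fun j _ => sq_nonneg (v j)) (mem_univ i))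

lemma min_neg_eq_zero {a b : ℝ} (ha : a ≤ 0) (hb : 0 ≤ b) (hab : a < 0 → b = 0) :
    min (-a) b = 0 := by
  rcases ha.lt_or_eq with ha | rfl
  · rw [hab ha]; exact min_eq_right (by linarith)
  · simpa using hb

lemma tendsto_nhds_zero_of_tendsto_min {α : Type*} {l : Filter α} {a b : α → ℝ} {c : ℝ}
    (hc : 0 < c) (ha : Tendsto a l (𝓝 c)) (hmin : Tendsto (fun j => min (a j) (b j)) l (𝓝 0)) :
    Tendsto b l (𝓝 0) := by
  refine hmin.congr' ?_
  filter_upwards [ha.eventually (lt_mem_nhds (half_lt_self hc)),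
    hmin.eventually (gt_mem_nhds (half_pos hc))] with j haj hminj
  exact min_eq_right (le_of_not_ge fun hab => by rw [min_eq_left hab] at hminj; linarith)

lemma nonpos_of_tendsto_min {α : Type*} {l : Filter α} [l.NeBot] {a b : α → ℝ} {c : ℝ}
    (ha : Tendsto a l (𝓝 c)) (hmin : Tendsto (fun j => min (-a j) (b j)) l (𝓝 0)) : c ≤ 0 :=
  neg_nonneg.1 <|
    le_of_tendsto_of_tendsto hmin ha.neg (Eventually.of_forall fun _ => min_le_left _ _)

lemma mapClusterPt_comp_add_iff {X : Type*} [TopologicalSpace X] {x : ℕ → X} {a : X} (k : ℕ) :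
    MapClusterPt a atTop (fun n => x (n + k)) ↔ MapClusterPt a atTop x := by
  change ClusterPt a (map (x ∘ (· + k)) atTop) ↔ _
  rw [← Filter.map_map, map_add_atTop_eq_nat]
  rfl

section PenaltyUpdate

variable {V ρ : ℕ → ℝ} {τ γ : ℝ}

def PenaltyUpdate (V ρ : ℕ → ℝ) (τ γ : ℝ) : Prop :=
  ∀ k, (V (k+1) ≤ τ * V k → ρ (k+1) = ρ k) ∧ (¬ V (k+1) ≤ τ * V k → ρ (k+1) = γ * ρ k)

lemma PenaltyUpdate.pos (hup : PenaltyUpdate V ρ τ γ) (hγ : 1 < γ) (hρ0 : 0 < ρ 0) (k : ℕ) :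
    0 < ρ k := by
  induction k with
  | zero => exact hρ0
  | succ k ih =>
    by_cases htest : V (k+1) ≤ τ * V k
    · rw [(hup k).1 htest]; exact ih
    · rw [(hup k).2 htest]; positivity

lemma PenaltyUpdate.monotone (hup : PenaltyUpdate V ρ τ γ) (hγ : 1 < γ) (hρ0 : 0 < ρ 0) :
    Monotone ρ := by
  refine monotone_nat_of_le_succ fun k => ?_
  by_cases htest : V (k+1) ≤ τ * V k
  · rw [(hup k).1 htest]
  · rw [(hup k).2 htest]
    exact le_mul_of_one_le_left (hup.pos hγ hρ0 k).le hγ.le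

lemma PenaltyUpdate.tendsto_atTop (hup : PenaltyUpdate V ρ τ γ) (hγ : 1 < γ) (hρ0 : 0 < ρ 0)
    (hfail : ∃ᶠ k in atTop, ¬ V (k+1) ≤ τ * V k) : Tendsto ρ atTop atTop := by
  have hgrow : ∀ r, ∃ k, γ ^ r * ρ 0 ≤ ρ k := by
    intro r
    induction r with
    | zero => exact ⟨0, by simp⟩
    | succ r ih =>
      obtain ⟨k, hk⟩ := ih
      obtain ⟨k', hkk', hk'⟩ := frequently_atTop.1 hfail k
      refine ⟨k' + 1, ?_⟩
      rw [(hup k').2 hk', pow_succ, mul_right_comm, mul_comm _ γ]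
      exact mul_le_mul_of_nonneg_left (hk.trans (hup.monotone hγ hρ0 hkk')) (by linarith)
  refine tendsto_atTop_atTop_of_monotone (hup.monotone hγ hρ0) fun b => ?_
  obtain ⟨r, hr⟩ :=
    ((tendsto_pow_atTop_atTop_of_one_lt hγ).atTop_mul_const hρ0).eventually_ge_atTop b |>.exists
  obtain ⟨k, hk⟩ := hgrow r
  exact ⟨k, hr.trans hk⟩

lemma PenaltyUpdate.tendsto_zero_or_tendsto_atTop (hup : PenaltyUpdate V ρ τ γ) (hτ : τ < 1)
    (hγ : 1 < γ) (hρ0 : 0 < ρ 0) (hV : ∀ k, 0 ≤ V k) :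
    Tendsto V atTop (𝓝 0) ∨ Tendsto ρ atTop atTop := by
  by_cases hpass : ∀ᶠ k in atTop, V (k+1) ≤ τ * V k
  · refine .inl (summable_of_ratio_norm_eventually_le hτ ?_).tendsto_atTop_zero
    simpa only [Real.norm_of_nonneg (hV _)] using hpass
  · exact .inr (hup.tendsto_atTop hγ hρ0 (not_eventually.1 hpass))

end PenaltyUpdate

section PenalizedMultiplier

variable {α : Type*} {l : Filter α} {u ρ c lam : α → ℝ} {cbar umax : ℝ}

lemma tendsto_max_add_mul_zero (hu : ∀ j, u j ≤ umax) (hρ : Tendsto ρ l atTop)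
    (hc : Tendsto c l (𝓝 cbar)) (hcbar : cbar < 0) :
    Tendsto (fun j => max (u j + ρ j * c j) 0) l (𝓝 0) := by
  refine tendsto_const_nhds.congr' ?_
  filter_upwards [hc.eventually (gt_mem_nhds (by linarith : cbar < cbar / 2)),
    hρ.eventually_ge_atTop (2 * |umax| / -cbar)] with j hcj hρj
  have hρ' : 2 * |umax| ≤ ρ j * -cbar := (div_le_iff₀ (by linarith)).1 hρj
  have hρpos : 0 ≤ ρ j := (div_nonneg (by positivity) (by linarith)).trans hρj
  have : ρ j * c j ≤ ρ j * (cbar / 2) := mul_le_mul_of_nonneg_left hcj.le hρpos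
  exact (max_eq_right (by nlinarith [hu j, le_abs_self umax])).symm

lemma tendsto_max_add_mul_atTop (hu : ∀ j, 0 ≤ u j) (hρ : Tendsto ρ l atTop)
    (hc : Tendsto c l (𝓝 cbar)) (hcbar : 0 < cbar) :
    Tendsto (fun j => max (u j + ρ j * c j) 0) l atTop := by
  refine tendsto_atTop_mono' l ?_ (hρ.atTop_mul_const (half_pos hcbar))
  filter_upwards [hc.eventually (lt_mem_nhds (half_lt_self hcbar)), hρ.eventually_ge_atTop 0]
    with j hcj hρj
  exact le_max_of_le_left (by nlinarith [hu j])

lemma tendsto_multiplier_zero_of_neg (hlam : ∀ j, lam j = max (u j + ρ j * c j) 0)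
    (hu : ∀ j, u j ≤ umax)
    (hρ : Tendsto (fun j => min (-c j) (lam j)) l (𝓝 0) ∨ Tendsto ρ l atTop)
    (hc : Tendsto c l (𝓝 cbar)) (hcbar : cbar < 0) : Tendsto lam l (𝓝 0) := by
  rcases hρ with hmin | hρ
  · exact tendsto_nhds_zero_of_tendsto_min (neg_pos.2 hcbar) hc.neg hmin
  · simpa only [← funext hlam] using tendsto_max_add_mul_zero hu hρ hc hcbar

lemma nonpos_of_not_tendsto_multiplier [l.NeBot] (hlam : ∀ j, lam j = max (u j + ρ j * c j) 0)
    (hu : ∀ j, 0 ≤ u j)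
    (hρ : Tendsto (fun j => min (-c j) (lam j)) l (𝓝 0) ∨ Tendsto ρ l atTop)
    (hc : Tendsto c l (𝓝 cbar)) (hlam_fin : ¬ Tendsto lam l atTop) : cbar ≤ 0 := by
  rcases hρ with hmin | hρ
  · exact nonpos_of_tendsto_min hc hmin
  · by_contra! hcbar
    exact hlam_fin <| by
      simpa only [← funext hlam] using tendsto_max_add_mul_atTop hu hρ hc hcbar

end PenalizedMultiplier

lemma isBoundedUnder_le_of_sum_mul_ge {α ι : Type*} [Fintype ι] {l : Filter α}
    {w s : α → ι → ℝ} {sbar : ι → ℝ} (hs : ∀ i, Tendsto (fun j => s j i) l (𝓝 (sbar i)))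
    (hw : ∀ i, ∀ᶠ j in l, -1 ≤ w j i)
    (halt : ∀ i, sbar i < 0 ∨ Tendsto (fun j => w j i) l (𝓝 0))
    (hsum : IsBoundedUnder (· ≥ ·) l (fun j => ∑ i, w j i * s j i)) (i : ι) :
    IsBoundedUnder (· ≤ ·) l (fun j => w j i) := by
  classical
  have hterm : ∀ k, IsBoundedUnder (· ≤ ·) l (fun j => w j k * s j k) := by
    intro k
    rcases halt k with hneg | hzero
    · refine isBoundedUnder_of_eventually_le (a := 1 - sbar k) ?_
      filter_upwards [hw k, (hs k).eventually (gt_mem_nhds hneg),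
        (hs k).eventually (lt_mem_nhds (sub_one_lt (sbar k)))] with j hwj hsj hsj'
      nlinarith
    · simpa using (hzero.mul (hs k)).isBoundedUnder_le
  obtain ⟨B, hB⟩ := hsum.eventually_ge
  choose T hT using fun k => (hterm k).eventually_le
  -- the other terms of the sum are bounded above, so the `i`-th one is bounded below
  obtain ⟨B', hlow⟩ : ∃ B', ∀ᶠ j in l, B' ≤ w j i * s j i := by
    refine ⟨B - ∑ k ∈ univ.erase i, T k, ?_⟩
    filter_upwards [hB, eventually_all.2 hT] with j hBj hTj
    have := add_sum_erase univ (fun k => w j k * s j k) (mem_univ i)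
    have := sum_le_sum fun k (_ : k ∈ univ.erase i) => hTj k
    linarith
  rcases halt i with hneg | hzero
  · refine isBoundedUnder_of_eventually_le (a := max 0 (2 * B' / sbar i)) ?_
    filter_upwards [hlow, (hs i).eventually (gt_mem_nhds (by linarith : sbar i < sbar i / 2))]
      with j hlj hsj
    rcases le_or_gt (w j i) 0 with hwj | hwj
    · exact le_max_of_le_left hwj
    · exact le_max_of_le_right ((le_div_iff_of_neg hneg).2 (by nlinarith))
  · exact hzero.isBoundedUnder_le

theorem exists_subseq_tendsto_multipliers {E ι : Type*} [NormedAddCommGroup E]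
    [InnerProductSpace ℝ E] [Fintype ι] {a : ℕ → E} {abar : E} (ha : Tendsto a atTop (𝓝 abar))
    {G : ℕ → ι → E} {Gbar : ι → E} (hG : ∀ i, Tendsto (fun j => G j i) atTop (𝓝 (Gbar i)))
    {w : ℕ → ι → ℝ} {e : ℕ → ℝ} (he : Tendsto e atTop (𝓝 0)) (hwe : ∀ j i, -e j ≤ w j i)
    (hres : Tendsto (fun j => a j + ∑ i, w j i • G j i) atTop (𝓝 0)) (d : E)
    (hd : ∀ i, ⟪Gbar i, d⟫ < 0 ∨ Tendsto (fun j => w j i) atTop (𝓝 0)) :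
    ∃ (wbar : ι → ℝ) (σ : ℕ → ℕ), StrictMono σ ∧ Tendsto (w ∘ σ) atTop (𝓝 wbar) ∧
      0 ≤ wbar ∧ abar + ∑ i, wbar i • Gbar i = 0 := by
  have hw1 : ∀ i, ∀ᶠ j in atTop, -1 ≤ w j i := fun i =>
    (he.eventually (gt_mem_nhds one_pos)).mono fun j hj => by linarith [hwe j i]
  have hsum : IsBoundedUnder (· ≥ ·) atTop (fun j => ∑ i, w j i * ⟪G j i, d⟫) := by
    have hlim := ((hres.sub ha).inner (𝕜 := ℝ) (tendsto_const_nhds (x := d))).isBoundedUnder_ge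
    simpa only [add_sub_cancel_left, sum_inner, real_inner_smul_left] using hlim
  have hup := isBoundedUnder_le_of_sum_mul_ge
    (fun i => (hG i).inner (𝕜 := ℝ) tendsto_const_nhds) hw1 hd hsum
  choose U hU using fun i => (hup i).eventually_le
  have hbdd : ∀ᶠ j in atTop, w j ∈ Set.Icc (-1) U :=
    (eventually_all.2 hw1).and (eventually_all.2 hU) |>.mono fun j hj => ⟨hj.1, hj.2⟩
  obtain ⟨wbar, -, σ, hσ, hwσ⟩ :=
    tendsto_subseq_of_frequently_bounded (Metric.isBounded_Icc _ _) hbdd.frequently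
  have hσ' := hσ.tendsto_atTop
  have hwσi : ∀ i, Tendsto (fun j => w (σ j) i) atTop (𝓝 (wbar i)) :=
    fun i => ((continuous_apply i).tendsto _).comp hwσ
  refine ⟨wbar, σ, hσ, hwσ, fun i => ?_, ?_⟩
  · simpa using le_of_tendsto_of_tendsto (he.comp hσ').neg (hwσi i)
      (Eventually.of_forall fun j => hwe _ i)
  · refine tendsto_nhds_unique ?_ (hres.comp hσ')
    exact (ha.comp hσ').add (tendsto_finsetSum _ fun i _ => (hwσi i).smul ((hG i).comp hσ'))

theorem kkt_of_tendsto_alm_iterates {X E ι κ : Type*} [TopologicalSpace X]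
    [NormedAddCommGroup E] [InnerProductSpace ℝ E] [Fintype ι] [Fintype κ]
    {F : X → E} {g : ι → X → ℝ} {Dg : ι → X → E} {h : κ → X → ℝ} {Dh : κ → X → E} {xbar : X}
    (hF : ContinuousAt F xbar) (hg : ∀ i, ContinuousAt (g i) xbar)
    (hDg : ∀ i, ContinuousAt (Dg i) xbar) (hh : ∀ k, ContinuousAt (h k) xbar)
    (hDh : ∀ k, ContinuousAt (Dh k) xbar) {y : ℕ → X} (hy : Tendsto y atTop (𝓝 xbar))
    {lam u : ℕ → ι → ℝ} {mu : ℕ → κ → ℝ} {ρ e : ℕ → ℝ} {umax : ℝ}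
    (hlam : ∀ j i, lam j i = max (u j i + ρ j * g i (y j)) 0)
    (hu : ∀ j i, u j i ∈ Set.Icc 0 umax)
    (hρ : (∀ i, Tendsto (fun j => min (-g i (y j)) (lam j i)) atTop (𝓝 0)) ∨
      Tendsto ρ atTop atTop)
    (hres : Tendsto (fun j => F (y j) + ∑ i, lam j i • Dg i (y j) + ∑ k, mu j k • Dh k (y j))
      atTop (𝓝 0))
    (hmu : ∀ j k, |min (-h k (y j)) (mu j k)| ≤ e j) (he : Tendsto e atTop (𝓝 0)) (d : E)
    (hdg : ∀ i, 0 ≤ g i xbar → ⟪Dg i xbar, d⟫ < 0) (hdh : ∀ k, 0 ≤ h k xbar → ⟪Dh k xbar, d⟫ < 0) :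
    (∀ i, g i xbar ≤ 0) ∧ (∀ k, h k xbar ≤ 0) ∧
      ∃ (lbar : ι → ℝ) (mbar : κ → ℝ),
        F xbar + ∑ i, lbar i • Dg i xbar + ∑ k, mbar k • Dh k xbar = 0 ∧
        (∀ i, min (-g i xbar) (lbar i) = 0) ∧ (∀ k, min (-h k xbar) (mbar k) = 0) := by
  have hgy i := (hg i).tendsto.comp hy
  have hhy k := (hh k).tendsto.comp hy
  have hminh k : Tendsto (fun j => min (-h k (y j)) (mu j k)) atTop (𝓝 0) :=
    squeeze_zero_norm (fun j => hmu j k) he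
  have hmu0 k (hk : h k xbar < 0) : Tendsto (fun j => mu j k) atTop (𝓝 0) :=
    tendsto_nhds_zero_of_tendsto_min (neg_pos.2 hk) (hhy k).neg (hminh k)
  have hlam0 i : g i xbar < 0 → Tendsto (fun j => lam j i) atTop (𝓝 0) :=
    tendsto_multiplier_zero_of_neg (fun j => hlam j i) (fun j => (hu j i).2)
      (hρ.imp_left (· i)) (hgy i)
  obtain ⟨w, σ, hσ, hwσ, hw0, hstat⟩ := exists_subseq_tendsto_multipliers (ι := ι ⊕ κ)
    (hF.tendsto.comp hy) (G := fun j => Sum.elim (fun i => Dg i (y j)) (fun k => Dh k (y j)))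
    (Gbar := Sum.elim (fun i => Dg i xbar) (fun k => Dh k xbar))
    (by rintro (i | k); exacts [(hDg i).tendsto.comp hy, (hDh k).tendsto.comp hy])
    (w := fun j => Sum.elim (lam j) (mu j)) (by simpa using he.abs)
    (by
      rintro j (i | k)
      · exact (neg_nonpos.2 (abs_nonneg _)).trans (by simp [hlam])
      · exact (abs_le.1 ((hmu j k).trans (le_abs_self _))).1.trans (min_le_right _ _))
    (by simpa [Fintype.sum_sum_type, add_assoc] using hres) d
    (by
      rintro (i | k)
      · rcases lt_or_ge (g i xbar) 0 with hi | hi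
        exacts [.inr (hlam0 i hi), .inl (hdg i hi)]
      · rcases lt_or_ge (h k xbar) 0 with hk | hk
        exacts [.inr (hmu0 k hk), .inl (hdh k hk)])
  have hσ' := hσ.tendsto_atTop
  have hwσ' s : Tendsto (fun j => Sum.elim (lam (σ j)) (mu (σ j)) s) atTop (𝓝 (w s)) :=
    ((continuous_apply s).tendsto _).comp hwσ
  have hfeas_g i : g i xbar ≤ 0 :=
    nonpos_of_not_tendsto_multiplier (fun j => hlam j i) (fun j => (hu j i).1)
      (hρ.imp_left (· i)) (hgy i)
      fun hinf => not_tendsto_atTop_of_tendsto_nhds (hwσ' (.inl i)) (hinf.comp hσ')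
  have hfeas_h k : h k xbar ≤ 0 := nonpos_of_tendsto_min (hhy k) (hminh k)
  refine ⟨hfeas_g, hfeas_h, fun i => w (.inl i), fun k => w (.inr k),
    by simpa [Fintype.sum_sum_type, add_assoc] using hstat, fun i => ?_, fun k => ?_⟩
  · exact min_neg_eq_zero (hfeas_g i) (hw0 (.inl i)) fun hi =>
      tendsto_nhds_unique (hwσ' (.inl i)) ((hlam0 i hi).comp hσ')
  · exact min_neg_eq_zero (hfeas_h k) (hw0 (.inr k)) fun hk =>
      tendsto_nhds_unique (hwσ' (.inr k)) ((hmu0 k hk).comp hσ')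

lemma continuous_pgrad {N : ℕ} {n : Fin N → ℕ} (ν : Fin N) {f : Strat n → ℝ}
    (hf : ContDiff ℝ 1 f) : Continuous (pgrad ν f) := by
  set L : EuclideanSpace ℝ (Fin (n ν)) →L[ℝ] Strat n := .pi (Pi.single ν (.id ℝ _))
  have hpgrad :
      pgrad ν f = fun x => (InnerProductSpace.toDual ℝ _).symm ((fderiv ℝ f x).comp L) := by
    funext x
    have hcomp := ((hf.differentiable one_ne_zero) (update x ν (x ν))).hasFDerivAt.comp (x ν)
      (hasFDerivAt_update x (x ν))
    rw [update_eq_self] at hcomp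
    exact congrArg _ hcomp.fderiv
  rw [hpgrad]
  exact (InnerProductSpace.toDual ℝ _).symm.continuous.comp
    ((hf.continuous_fderiv one_ne_zero).clm_comp continuous_const)

theorem stmt15_general {N : ℕ} {n m p : Fin N → ℕ}
    (θ : Fin N → Strat n → ℝ)
    (g : (ν : Fin N) → Fin (m ν) → Strat n → ℝ)
    (h : (ν : Fin N) → Fin (p ν) → Strat n → ℝ)
    (hθ : ∀ ν, ContDiff ℝ 1 (θ ν))
    (hg : ∀ ν i, ContDiff ℝ 1 (g ν i))
    (hh : ∀ ν j, ContDiff ℝ 1 (h ν j))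
    (x : ℕ → Strat n)
    (lam : (k : ℕ) → (ν : Fin N) → Fin (m ν) → ℝ)
    (mu : (k : ℕ) → (ν : Fin N) → Fin (p ν) → ℝ)
    (u : (k : ℕ) → (ν : Fin N) → Fin (m ν) → ℝ)
    (rho : ℕ → Fin N → ℝ)
    (umax : ℝ) (τ γ : Fin N → ℝ)
    (humax : 0 ≤ umax)
    (hτ : ∀ ν, τ ν ∈ Set.Ioo (0:ℝ) 1)
    (hγ : ∀ ν, 1 < γ ν)
    (hrho0 : ∀ ν, 0 < rho 0 ν)
    (hu0 : ∀ ν i, u 0 ν i ∈ Set.Icc 0 umax)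
    (hlam : ∀ k ν i, lam (k+1) ν i = max (u k ν i + rho k ν * g ν i (x (k+1))) 0)
    (hu : ∀ k ν i, u (k+1) ν i = min (lam (k+1) ν i) umax)
    (hrho : ∀ k ν,
      (Real.sqrt (∑ i, (min (-(g ν i (x (k+1)))) (lam (k+1) ν i)) ^ 2) ≤
          τ ν * Real.sqrt (∑ i, (min (-(g ν i (x k))) (lam k ν i)) ^ 2) →
        rho (k+1) ν = rho k ν) ∧
      (¬ (Real.sqrt (∑ i, (min (-(g ν i (x (k+1)))) (lam (k+1) ν i)) ^ 2) ≤
          τ ν * Real.sqrt (∑ i, (min (-(g ν i (x k))) (lam k ν i)) ^ 2)) →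
        rho (k+1) ν = γ ν * rho k ν))
    (eps eps' : ℕ → ℝ)
    (heps' : Tendsto eps' atTop (𝓝 0))
    (hA1 : ∀ k ν, ‖pgrad ν (θ ν) (x (k+1))
        + ∑ i, max (u k ν i + rho k ν * g ν i (x (k+1))) 0 • pgrad ν (g ν i) (x (k+1))
        + ∑ j, mu (k+1) ν j • pgrad ν (h ν j) (x (k+1))‖ ≤ eps k)
    (hA2 : ∀ k ν, Real.sqrt (∑ j, (min (-(h ν j (x (k+1)))) (mu (k+1) ν j)) ^ 2) ≤ eps' k)
    (heps : Tendsto eps atTop (𝓝 0))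
    (xbar : Strat n)
    (hclus : MapClusterPt xbar atTop x)
    (hEMFCQ : ∀ ν, EMFCQnu ν (Sum.elim (g ν) (h ν)) xbar) :
    ((∀ ν i, g ν i xbar ≤ 0) ∧ (∀ ν j, h ν j xbar ≤ 0)) ∧
    ∃ (lambar : (ν : Fin N) → Fin (m ν) → ℝ) (mubar : (ν : Fin N) → Fin (p ν) → ℝ),
      ∀ ν, (pgrad ν (θ ν) xbar + ∑ i, lambar ν i • pgrad ν (g ν i) xbar
          + ∑ j, mubar ν j • pgrad ν (h ν j) xbar = 0) ∧
        (∀ i, min (-(g ν i xbar)) (lambar ν i) = 0) ∧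
        (∀ j, min (-(h ν j xbar)) (mubar ν j) = 0) := by
  obtain ⟨φ, hφ, hxφ⟩ := ((mapClusterPt_comp_add_iff 1).2 hclus).tendsto_subseq
  have hφ' := hφ.tendsto_atTop
  have hu_mem : ∀ k ν i, u k ν i ∈ Set.Icc 0 umax := by
    rintro (_ | k) ν i
    · exact hu0 ν i
    · rw [hu, hlam]
      exact ⟨le_min (le_max_right _ _) humax, min_le_right _ _⟩
  have hdich ν : (∀ i, Tendsto (fun j => min (-g ν i (x (φ j + 1))) (lam (φ j + 1) ν i)) atTop
      (𝓝 0)) ∨ Tendsto (fun j => rho (φ j) ν) atTop atTop :=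
    (PenaltyUpdate.tendsto_zero_or_tendsto_atTop (ρ := (rho · ν))
      (V := fun k => √(∑ i, (min (-g ν i (x k)) (lam k ν i)) ^ 2))
      (fun k => hrho k ν) (hτ ν).2 (hγ ν) (hrho0 ν) fun k => Real.sqrt_nonneg _).imp
      (fun hV i => squeeze_zero_norm
        (fun j => abs_le_sqrt_sum_sq (fun i => min (-g ν i (x (φ j + 1))) (lam (φ j + 1) ν i)) i)
        (hV.comp ((tendsto_add_atTop_nat 1).comp hφ')))
      (fun hρ => hρ.comp hφ')
  choose d hd using hEMFCQ
  have hplayer ν := kkt_of_tendsto_alm_iterates (continuous_pgrad ν (hθ ν)).continuousAt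
      (fun i => (hg ν i).continuous.continuousAt)
      (fun i => (continuous_pgrad ν (hg ν i)).continuousAt)
      (fun j => (hh ν j).continuous.continuousAt)
      (fun j => (continuous_pgrad ν (hh ν j)).continuousAt) hxφ
      (fun j i => hlam (φ j) ν i) (fun j i => hu_mem (φ j) ν i) (hdich ν)
      (squeeze_zero_norm (fun j => by simpa only [hlam, comp_apply] using hA1 (φ j) ν)
        (heps.comp hφ'))
      (fun j k => (abs_le_sqrt_sum_sq _ k).trans (hA2 (φ j) ν)) (heps'.comp hφ') (d ν)
      (fun i => hd ν (.inl i)) (fun k => hd ν (.inr k))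
  choose hfeas_g hfeas_h lambar mubar hkkt using hplayer
  exact ⟨⟨hfeas_g, hfeas_h⟩, lambar, mubar, hkkt⟩

/-- **Theorem 4.6 (b).** A limit point of the augmented Lagrangian iterates at
which GNEP-EMFCQ holds for the combined constraints is feasible and a KKT point of the GNEP. -/
theorem stmt15 {N : ℕ} {n m p : Fin N → ℕ}
    (θ : Fin N → Strat n → ℝ)
    (g : (ν : Fin N) → Fin (m ν) → Strat n → ℝ)
    (h : (ν : Fin N) → Fin (p ν) → Strat n → ℝ)
    (hθ : ∀ ν, ContDiff ℝ 1 (θ ν))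
    (hg : ∀ ν i, ContDiff ℝ 1 (g ν i))
    (hh : ∀ ν j, ContDiff ℝ 1 (h ν j))
    (x : ℕ → Strat n)
    (lam : (k : ℕ) → (ν : Fin N) → Fin (m ν) → ℝ)
    (mu : (k : ℕ) → (ν : Fin N) → Fin (p ν) → ℝ)
    (u : (k : ℕ) → (ν : Fin N) → Fin (m ν) → ℝ)
    (rho : ℕ → Fin N → ℝ)
    (umax : ℝ) (τ γ : Fin N → ℝ)
    (humax : 0 ≤ umax)
    (hτ : ∀ ν, τ ν ∈ Set.Ioo (0:ℝ) 1)
    (hγ : ∀ ν, 1 < γ ν)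
    (hrho0 : ∀ ν, 0 < rho 0 ν)
    (hu0 : ∀ ν i, u 0 ν i ∈ Set.Icc 0 umax)
    (hlam : ∀ k ν i, lam (k+1) ν i = max (u k ν i + rho k ν * g ν i (x (k+1))) 0)
    (hu : ∀ k ν i, u (k+1) ν i = min (lam (k+1) ν i) umax)
    (hrho : ∀ k ν,
      (Real.sqrt (∑ i, (min (-(g ν i (x (k+1)))) (lam (k+1) ν i)) ^ 2) ≤
          τ ν * Real.sqrt (∑ i, (min (-(g ν i (x k))) (lam k ν i)) ^ 2) →
        rho (k+1) ν = rho k ν) ∧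
      (¬ (Real.sqrt (∑ i, (min (-(g ν i (x (k+1)))) (lam (k+1) ν i)) ^ 2) ≤
          τ ν * Real.sqrt (∑ i, (min (-(g ν i (x k))) (lam k ν i)) ^ 2)) →
        rho (k+1) ν = γ ν * rho k ν))
    (eps eps' : ℕ → ℝ)
    (heps0 : ∀ k, 0 ≤ eps k)
    (heps'0 : ∀ k, 0 ≤ eps' k)
    (heps' : Tendsto eps' atTop (𝓝 0))
    (hA1 : ∀ k ν, ‖pgrad ν (θ ν) (x (k+1))
        + ∑ i, max (u k ν i + rho k ν * g ν i (x (k+1))) 0 • pgrad ν (g ν i) (x (k+1))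
        + ∑ j, mu (k+1) ν j • pgrad ν (h ν j) (x (k+1))‖ ≤ eps k)
    (hA2 : ∀ k ν, Real.sqrt (∑ j, (min (-(h ν j (x (k+1)))) (mu (k+1) ν j)) ^ 2) ≤ eps' k)
    (heps : Tendsto eps atTop (𝓝 0))
    (xbar : Strat n)
    (hclus : MapClusterPt xbar atTop x)
    (hEMFCQ : ∀ ν, EMFCQnu ν (Sum.elim (g ν) (h ν)) xbar) :
    ((∀ ν i, g ν i xbar ≤ 0) ∧ (∀ ν j, h ν j xbar ≤ 0)) ∧
    ∃ (lambar : (ν : Fin N) → Fin (m ν) → ℝ) (mubar : (ν : Fin N) → Fin (p ν) → ℝ),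
      ∀ ν, (pgrad ν (θ ν) xbar + ∑ i, lambar ν i • pgrad ν (g ν i) xbar
          + ∑ j, mubar ν j • pgrad ν (h ν j) xbar = 0) ∧
        (∀ i, min (-(g ν i xbar)) (lambar ν i) = 0) ∧
        (∀ j, min (-(h ν j xbar)) (mubar ν j) = 0) :=
  stmt15_general θ g h hθ hg hh x lam mu u rho umax τ γ humax hτ hγ hrho0 hu0 hlam hu hrho eps eps'
    heps' hA1 hA2 heps xbar hclus hEMFCQ
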